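/- Commutativity of weak curl with projection: for ψ ∈ H(curl;T), the discrete weak curl of the projected weak vector field ℚ_h ψ = {ℚ₀ψ, ℚ_bψ} equals the L² projection of the classical curl: ∇_w×(ℚ_h ψ) = 𝒬_h(∇×ψ). -/

import Mathlib

open scoped RealInnerProductSpace

/-! Both sides of the weak-curl identity are tested only against polynomial fields `φ`, and
each projection is invisible there: `ℚ₀` against `∇×φ ∈ [P_k(T)]³`, `ℚ_b` against the
representative of `⟨· × n, φ⟩_{∂T}` in `G_k`, and `𝒬_h` against `φ` itself. The integration-by-parts
identity then shows that `∇_w×(ℚ_h ψ)` and `𝒬_h(∇×ψ)` have the same moments against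
`[P_k(T)]³`, and two elements of `[P_k(T)]³` with equal moments coincide. -/

section

variable {E : Type*} [NormedAddCommGroup E] [InnerProductSpace ℝ E]

theorem inner_left_eq_of_inner_sub_eq_zero {v w p : E} (h : ⟪v - w, p⟫ = 0) :
    ⟪w, p⟫ = ⟪v, p⟫ := by
  rw [inner_sub_left, sub_eq_zero] at h
  exact h.symm

theorem Submodule.eq_of_forall_inner_eq {K : Submodule ℝ E} {x y : E} (hx : x ∈ K) (hy : y ∈ K)
    (h : ∀ φ ∈ K, ⟪x, φ⟫ = ⟪y, φ⟫) : x = y := by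
  have hzero : ⟪x - y, x - y⟫ = 0 := by
    rw [inner_sub_left, h _ (K.sub_mem hx hy), sub_self]
  rwa [inner_self_eq_zero, sub_eq_zero] at hzero

theorem apply_projection_eq_of_represented {F : Type*} [NormedAddCommGroup F]
    [InnerProductSpace ℝ F] {G : Submodule ℝ F} {Q : F → F}
    (hQorth : ∀ b : F, ∀ p ∈ G, ⟪b - Q b, p⟫ = 0)
    {ℓ : F → ℝ} {g : F} (hg : g ∈ G) (hℓ : ∀ b, ℓ b = ⟪b, g⟫) (b : F) :
    ℓ (Q b) = ℓ b := by
  rw [hℓ, hℓ]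
  exact inner_left_eq_of_inner_sub_eq_zero (hQorth b g hg)

end

theorem stmt_11_general
    {Vv Bv : Type*}
    [NormedAddCommGroup Vv] [InnerProductSpace ℝ Vv]
    [NormedAddCommGroup Bv] [InnerProductSpace ℝ Bv]
    (PkV : Submodule ℝ Vv) (Gk : Submodule ℝ Bv)
    (QV : Vv →ₗ[ℝ] Vv) (hQVmem : ∀ v, QV v ∈ PkV)
    (hQVorth : ∀ v : Vv, ∀ p ∈ PkV, ⟪v - QV v, p⟫ = 0)
    (Qb : Bv →ₗ[ℝ] Bv)
    (hQborth : ∀ b : Bv, ∀ p ∈ Gk, ⟪b - Qb b, p⟫ = 0)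
    (curlM : Vv →ₗ[ℝ] Vv) (hcurlMem : ∀ φ ∈ PkV, curlM φ ∈ PkV)
    -- boundary pairing ⟨b×n, φ⟩_{∂T}
    (bp : Bv →ₗ[ℝ] Vv →ₗ[ℝ] ℝ)
    (hbp : ∀ φ ∈ PkV, ∃ g ∈ Gk, ∀ b : Bv, bp b φ = ⟪b, g⟫)
    -- ψ ∈ H(curl;T): value psi0, tangential trace psitr, curl cpsi
    (psi0 : Vv) (psitr : Bv) (cpsi : Vv)
    (hIBP : ∀ φ ∈ PkV, ⟪cpsi, φ⟫ = ⟪psi0, curlM φ⟫ - bp psitr φ)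
    -- C is the discrete weak curl of ℚ_h ψ = {QV psi0, Qb psitr}
    (C : Vv) (hCmem : C ∈ PkV)
    (hC : ∀ φ ∈ PkV, ⟪C, φ⟫ = ⟪QV psi0, curlM φ⟫ - bp (Qb psitr) φ) :
    C = QV cpsi := by
  have hQV : ∀ v, ∀ p ∈ PkV, ⟪QV v, p⟫ = ⟪v, p⟫ := fun v p hp =>
    inner_left_eq_of_inner_sub_eq_zero (hQVorth v p hp)
  have hQb : ∀ φ ∈ PkV, bp (Qb psitr) φ = bp psitr φ := by
    intro φ hφ
    obtain ⟨g, hg, hgφ⟩ := hbp φ hφ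
    exact apply_projection_eq_of_represented hQborth hg hgφ psitr
  refine PkV.eq_of_forall_inner_eq hCmem (hQVmem cpsi) fun φ hφ => ?_
  rw [hC φ hφ, hQV cpsi φ hφ, hIBP φ hφ, hQV psi0 _ (hcurlMem φ hφ), hQb φ hφ]

/-- Commutativity of the weak curl with projection: for
`ψ ∈ H(curl;T)`, the discrete weak curl of the projected weak vector field
`ℚ_h ψ = {ℚ₀ψ, ℚ_bψ}` equals the L² projection of the classical curl:
`∇_w×(ℚ_h ψ) = 𝒬_h(∇×ψ)`.

Abstraction: `Vv = [L²(T)]³` with polynomial subspace `PkV = [P_k(T)]³`, `Bv` the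
boundary L² tangential fields with subspace `Gk = [P_k(σ)]³×n_σ`; `QV` and `Qb` are
the L² projections `ℚ₀ = 𝒬_h` and `ℚ_b`; `curlM` is the curl of polynomial test
fields; `bp b φ = ⟨b×n, φ⟩_{∂T}`, which for polynomial `φ` is represented by an
element of `Gk` (hypothesis `hbp`).  `ψ` is given by its value `psi0`, tangential
trace `psitr`, and curl `cpsi`, tied by the integration-by-parts identity
`(∇×ψ, φ)_T = (ψ, ∇×φ)_T - ⟨ψ×n, φ⟩_{∂T}`.  Any `C ∈ [P_k(T)]³` satisfying the
defining relation of `∇_w×(ℚ_h ψ)` equals `𝒬_h(∇×ψ) = QV cpsi`. -/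
theorem stmt_11
    {Vv Bv : Type*}
    [NormedAddCommGroup Vv] [InnerProductSpace ℝ Vv]
    [NormedAddCommGroup Bv] [InnerProductSpace ℝ Bv]
    (PkV : Submodule ℝ Vv) (Gk : Submodule ℝ Bv)
    (QV : Vv →ₗ[ℝ] Vv) (hQVmem : ∀ v, QV v ∈ PkV)
    (hQVorth : ∀ v : Vv, ∀ p ∈ PkV, ⟪v - QV v, p⟫ = 0)
    (Qb : Bv →ₗ[ℝ] Bv) (hQbmem : ∀ b, Qb b ∈ Gk)
    (hQborth : ∀ b : Bv, ∀ p ∈ Gk, ⟪b - Qb b, p⟫ = 0)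
    (curlM : Vv →ₗ[ℝ] Vv) (hcurlMem : ∀ φ ∈ PkV, curlM φ ∈ PkV)
    -- boundary pairing ⟨b×n, φ⟩_{∂T}
    (bp : Bv →ₗ[ℝ] Vv →ₗ[ℝ] ℝ)
    (hbp : ∀ φ ∈ PkV, ∃ g ∈ Gk, ∀ b : Bv, bp b φ = ⟪b, g⟫)
    -- ψ ∈ H(curl;T): value psi0, tangential trace psitr, curl cpsi
    (psi0 : Vv) (psitr : Bv) (cpsi : Vv)
    (hIBP : ∀ φ ∈ PkV, ⟪cpsi, φ⟫ = ⟪psi0, curlM φ⟫ - bp psitr φ)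
    -- C is the discrete weak curl of ℚ_h ψ = {QV psi0, Qb psitr}
    (C : Vv) (hCmem : C ∈ PkV)
    (hC : ∀ φ ∈ PkV, ⟪C, φ⟫ = ⟪QV psi0, curlM φ⟫ - bp (Qb psitr) φ) :
    C = QV cpsi :=
  stmt_11_general PkV Gk QV hQVmem hQVorth Qb hQborth curlM hcurlMem bp hbp psi0 psitr cpsi hIBP C
    hCmem hC
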